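/- Let φ(t) = (1/√(2π))·e^{−t²/2} and Φ(z) = ∫_{−∞}^{z} φ(t) dt. Then for all real constants a and c, ∫_{−∞}^{∞} t·Φ(a + c·t)·φ(t) dt = ( c / (√(2π)·√(1 + c²)) ) · exp( −a² / (2·(1 + c²)) ). -/

import Mathlib

open MeasureTheory

/-- The standard normal density `φ(t) = (1/√(2π)) e^{-t²/2}`. -/
noncomputable def phi (t : ℝ) : ℝ := (1 / Real.sqrt (2 * Real.pi)) * Real.exp (-t ^ 2 / 2)

/-- The standard normal distribution function `Φ(z) = ∫_{-∞}^z φ(t) dt`. -/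
noncomputable def Phi (z : ℝ) : ℝ := ∫ t in Set.Iic z, phi t

open Real Filter

lemma phi_cont : Continuous phi := by
  unfold phi; fun_prop

lemma phi_nonneg (t : ℝ) : 0 ≤ phi t := by
  unfold phi; positivity

lemma phi_eq (t : ℝ) : phi t = (1 / Real.sqrt (2 * Real.pi)) * Real.exp (-(1/2) * t ^ 2) := by
  unfold phi; congr 1; ring_nf

lemma phi_integrable : Integrable phi := by
  have h : Integrable (fun t : ℝ => Real.exp (-(1/2) * t ^ 2)) :=
    integrable_exp_neg_mul_sq (by norm_num)
  have h2 := h.const_mul (1 / Real.sqrt (2 * Real.pi))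
  rw [show phi = fun t => (1 / Real.sqrt (2 * Real.pi)) * Real.exp (-(1/2) * t ^ 2)
    from funext phi_eq]
  exact h2

lemma Phi_hasDerivAt (z : ℝ) : HasDerivAt Phi (phi z) z := by
  have key : Phi = fun z => Phi 0 + ∫ t in (0:ℝ)..z, phi t := by
    funext z
    unfold Phi
    rw [← intervalIntegral.integral_Iic_sub_Iic phi_integrable.integrableOn
      phi_integrable.integrableOn]
    ring
  rw [key]
  refine HasDerivAt.const_add _ ?_
  exact intervalIntegral.integral_hasDerivAt_right
    phi_integrable.intervalIntegrable
    phi_cont.stronglyMeasurable.stronglyMeasurableAtFilter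
    phi_cont.continuousAt

lemma Phi_bounded (z : ℝ) : ‖Phi z‖ ≤ ∫ t, phi t := by
  rw [Real.norm_eq_abs, abs_of_nonneg]
  · exact setIntegral_le_integral phi_integrable (Filter.Eventually.of_forall phi_nonneg)
  · exact setIntegral_nonneg measurableSet_Iic fun t _ => phi_nonneg t

theorem stmt13 (a c : ℝ) :
    (∫ t : ℝ, t * Phi (a + c * t) * phi t) =
      (c / (Real.sqrt (2 * Real.pi) * Real.sqrt (1 + c ^ 2))) *
        Real.exp (-a ^ 2 / (2 * (1 + c ^ 2))) := by
  set k : ℝ := 1 + c ^ 2 with hk_def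
  have hk : 0 < k := by positivity
  have hπ : (0:ℝ) < 2 * Real.pi := by positivity
  have h2π : Real.sqrt (2 * Real.pi) * Real.sqrt (2 * Real.pi) = 2 * Real.pi :=
    Real.mul_self_sqrt hπ.le
  set μ : ℝ := a * c / k with hμ_def
  -- pointwise Gaussian product identity
  have hpt : ∀ t : ℝ, phi (a + c * t) * phi t =
      (1 / (2 * Real.pi)) * Real.exp (-a ^ 2 / (2 * k)) *
        Real.exp (-(k/2) * (t + μ) ^ 2) := by
    intro t
    unfold phi
    have e : -(a + c * t) ^ 2 / 2 + -t ^ 2 / 2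
        = -a ^ 2 / (2 * k) + -(k/2) * (t + μ) ^ 2 := by
      rw [hμ_def, hk_def]
      field_simp
      ring
    rw [mul_mul_mul_comm, ← Real.exp_add, e, Real.exp_add, div_mul_div_comm, one_mul, h2π,
      ← mul_assoc]
  -- integrability of the Gaussian product
  have hg : Integrable (fun t : ℝ => Real.exp (-(k/2) * (t + μ) ^ 2)) := by
    have h : Integrable (fun t : ℝ => Real.exp (-(k/2) * t ^ 2)) :=
      integrable_exp_neg_mul_sq (by positivity)
    exact (measurePreserving_add_right volume μ).integrable_comp
      h.aestronglyMeasurable |>.mpr h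
  have hprod : Integrable (fun t : ℝ => phi (a + c * t) * phi t) := by
    simp_rw [hpt]
    exact hg.const_mul _
  -- value of the Gaussian product integral
  have hval : (∫ t : ℝ, phi (a + c * t) * phi t) =
      (1 / (2 * Real.pi)) * Real.exp (-a ^ 2 / (2 * k)) * Real.sqrt (Real.pi / (k/2)) := by
    simp_rw [hpt]
    rw [integral_const_mul]
    congr 1
    rw [integral_add_right_eq_self (fun t : ℝ => Real.exp (-(k/2) * t ^ 2)) μ]
    exact integral_gaussian (k/2)
  -- integration by parts
  have hC : Continuous fun t : ℝ => Phi (a + c * t) := by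
    have : Continuous Phi :=
      continuous_iff_continuousAt.mpr fun z => (Phi_hasDerivAt z).continuousAt
    fun_prop
  have hu : ∀ t : ℝ, HasDerivAt (fun t => Phi (a + c * t)) (c * phi (a + c * t)) t := by
    intro t
    have h1 : HasDerivAt (fun t : ℝ => a + c * t) c t := by
      simpa using ((hasDerivAt_id t).const_mul c).const_add a
    exact ((Phi_hasDerivAt (a + c * t)).comp t h1).congr_deriv (mul_comm _ _)
  have hv : ∀ t : ℝ, HasDerivAt (fun t => -phi t) (t * phi t) t := by
    intro t
    have h1 : HasDerivAt (fun t : ℝ => -t ^ 2 / 2) (-t) t := by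
      have h0 := ((hasDerivAt_pow 2 t).neg).div_const 2
      exact h0.congr_deriv (by push_cast; ring)
    have h2 := (h1.exp.const_mul (1 / Real.sqrt (2 * Real.pi))).neg
    have h3 : t * phi t = -(1 / Real.sqrt (2 * Real.pi) * (Real.exp (-t ^ 2 / 2) * -t)) := by
      unfold phi; ring
    rw [h3]
    exact h2
  have htphi : Integrable (fun t : ℝ => t * phi t) := by
    have h : Integrable (fun t : ℝ => t * Real.exp (-(1/2) * t ^ 2)) := by
      simpa using integrable_mul_exp_neg_mul_sq (b := (1/2 : ℝ)) (by norm_num)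
    have := h.const_mul (1 / Real.sqrt (2 * Real.pi))
    apply this.congr
    filter_upwards with t
    rw [phi_eq]; ring
  have huv' : Integrable ((fun t : ℝ => Phi (a + c * t)) * fun t => t * phi t) :=
    Integrable.bdd_mul htphi hC.aestronglyMeasurable (Filter.Eventually.of_forall fun t => Phi_bounded _)
  have hu'v : Integrable ((fun t : ℝ => c * phi (a + c * t)) * fun t => -phi t) := by
    have := (hprod.const_mul (-c))
    apply this.congr
    filter_upwards with t
    simp [Pi.mul_apply]; ring
  have huv : Integrable ((fun t : ℝ => Phi (a + c * t)) * fun t => -phi t) :=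
    Integrable.bdd_mul phi_integrable.neg hC.aestronglyMeasurable
      (Filter.Eventually.of_forall fun t => Phi_bounded _)
  have hparts := integral_mul_deriv_eq_deriv_mul_of_integrable (fun t _ => hu t) (fun t _ => hv t) huv' hu'v huv
  have hLHS : (∫ t : ℝ, t * Phi (a + c * t) * phi t) = c * ∫ t : ℝ, phi (a + c * t) * phi t := by
    have e1 : (∫ t : ℝ, t * Phi (a + c * t) * phi t)
        = ∫ t : ℝ, Phi (a + c * t) * (t * phi t) := by
      congr 1; funext t; ring
    rw [e1, hparts, ← integral_neg, ← integral_const_mul]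
    congr 1; funext t; ring
  rw [hLHS, hval]
  have hsq : Real.sqrt (Real.pi / (k/2)) = Real.sqrt (2 * Real.pi) / Real.sqrt k := by
    rw [← Real.sqrt_div hπ.le]
    congr 1
    field_simp
  rw [hsq]
  have h1 : Real.sqrt (2 * Real.pi) ≠ 0 := by positivity
  have h2 : Real.sqrt k ≠ 0 := by positivity
  rw [show (2 * Real.pi) = Real.sqrt (2 * Real.pi) * Real.sqrt (2 * Real.pi) from h2π.symm]
  field_simp
  rw [Real.sqrt_sq (by positivity)]
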